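/- Every non-terminal configuration of TX10 can make a transition: if a configuration k = <s,g> cannot perform any labeled transition at place 0, then k must already be a terminal configuration of the form g (a bare heap). Equivalently, the transition relation has no stuck states. -/

import Mathlib

namespace TX10

abbrev Place := ℕ
abbrev VarName := ℕ
abbrev FieldName := ℕ
/-- Object identifiers: a home place together with a serial number. -/
abbrev ObjId := Place × ℕ

/-- The home place of an object id. -/
def home (o : ObjId) : Place := o.1

/-- Values: local object references, global references `o$home(o)`,
and the exception constants E, BadFieldSelection, BadGlobalRef, DeadPlaceException. -/
inductive Val : Type where
  | obj (o : ObjId)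
  | gref (o : ObjId)
  | exE
  | exBF
  | exBG
  | exDP
deriving DecidableEq

inductive Expr : Type where
  | val (v : Val)
  | var (x : VarName)
  | select (e : Expr) (f : FieldName)
  | newObj (fs : List (FieldName × Expr))
  | globalref (e : Expr)
  | valof (e : Expr)
deriving Inhabited

/-- Statements of TX10 (including the dynamic statements `atD` and `spawned`). -/
inductive Stmt : Type where
  | skip
  | throw (v : Val)
  | bind (x : VarName) (e : Expr) (s : Stmt)          -- val x = e s
  | assign (e1 : Expr) (f : FieldName) (e2 : Expr)    -- e1.f = e2
  | seq (s t : Stmt)                                  -- {s t}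
  | atE (p : Place) (x : VarName) (e : Expr) (s : Stmt)  -- at(p)(val x = e) s
  | async (s : Stmt)
  | finish (μ : List Val) (s : Stmt)                  -- finish_μ s
  | tryCatch (s t : Stmt)
  | atD (p : Place) (s : Stmt)                        -- dynamic at
  | spawned (s : Stmt)                                -- dynamic async
deriving Inhabited

/-- The asynchrony predicate (least such predicate). -/
inductive isAsync : Stmt → Prop where
  | spawned (s : Stmt) : isAsync (.spawned s)
  | atD {s : Stmt} (p : Place) : isAsync s → isAsync (.atD p s)
  | tryCatch {s : Stmt} (t : Stmt) : isAsync s → isAsync (.tryCatch s t)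
  | seq {s t : Stmt} : isAsync s → isAsync t → isAsync (.seq s t)

/-- The synchrony predicate (least such predicate). -/
inductive isSync : Stmt → Prop where
  | skip : isSync .skip
  | throw (v : Val) : isSync (.throw v)
  | bind (x : VarName) (e : Expr) (s : Stmt) : isSync (.bind x e s)
  | assign (e1 : Expr) (f : FieldName) (e2 : Expr) : isSync (.assign e1 f e2)
  | atE (p : Place) (x : VarName) (e : Expr) (s : Stmt) : isSync (.atE p x e s)
  | async (s : Stmt) : isSync (.async s)
  | finish (μ : List Val) (s : Stmt) : isSync (.finish μ s)
  | seqL {s : Stmt} (t : Stmt) : isSync s → isSync (.seq s t)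
  | seqR {s : Stmt} (t : Stmt) : isSync s → isSync (.seq t s)
  | atD {s : Stmt} (p : Place) : isSync s → isSync (.atD p s)
  | tryCatch {s : Stmt} (t : Stmt) : isSync s → isSync (.tryCatch s t)

/-- Objects: partial maps from field names to values. -/
abbrev Obj := FieldName → Option Val
/-- Local heaps: partial maps from object ids to objects. -/
abbrev Heap := ObjId → Option Obj
/-- Global heaps: partial maps from places to local heaps;
`g p = none` means place `p` is failed (or absent). -/
abbrev GHeap := Place → Option Heap

/-- Transition labels: ε, asynchronous exception v×, synchronous exception v⊗. -/
inductive Label : Type where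
  | eps
  | excA (v : Val)
  | excS (v : Val)
deriving DecidableEq

def substE (x : VarName) (v : Val) : Expr → Expr
  | .val w => .val w
  | .var y => if y = x then .val v else .var y
  | .select e f => .select (substE x v e) f
  | .newObj fs => .newObj (fs.attach.map (fun fe => (fe.1.1, substE x v fe.1.2)))
  | .globalref e => .globalref (substE x v e)
  | .valof e => .valof (substE x v e)
decreasing_by
  all_goals simp_wf
  all_goals try omega
  all_goals
    (obtain ⟨⟨f1, e1⟩, hmem⟩ := fe
     have := List.sizeOf_lt_of_mem hmem
     simp at this ⊢
     omega)

/-- Capture-respecting substitution `s[v/x]` (variables declared in the program are distinct). -/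
def subst (x : VarName) (v : Val) : Stmt → Stmt
  | .skip => .skip
  | .throw w => .throw w
  | .bind y e s => .bind y (substE x v e) (if y = x then s else subst x v s)
  | .assign e1 f e2 => .assign (substE x v e1) f (substE x v e2)
  | .seq s t => .seq (subst x v s) (subst x v t)
  | .atE p y e s => .atE p y (substE x v e) (if y = x then s else subst x v s)
  | .async s => .async (subst x v s)
  | .finish μ s => .finish μ (subst x v s)
  | .tryCatch s t => .tryCatch (subst x v s) (subst x v t)
  | .atD p s => .atD p (subst x v s)
  | .spawned s => .spawned (subst x v s)

/-- Local reachability in a heap: `Reach h v w` means `w` is reachable from `v`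
through the fields of objects in `h`. -/
inductive Reach (h : Heap) : Val → Val → Prop where
  | refl (v : Val) : Reach h v v
  | step {v : Val} {o : ObjId} {r : Obj} {f : FieldName} {w : Val} :
      Reach h v (.obj o) → h o = some r → r f = some w → Reach h v w

/-- Isomorphism of object graphs rooted at `v1` in `h1` and `v2` in `h2`,
witnessed by `ι`, which is the identity on global references. -/
structure GraphIso (h1 : Heap) (v1 : Val) (h2 : Heap) (v2 : Val) (ι : Val → Val) : Prop where
  root : ι v1 = v2
  reach : ∀ w, Reach h1 v1 w → Reach h2 v2 (ι w)
  inj : ∀ w w', Reach h1 v1 w → Reach h1 v1 w' → ι w = ι w' → w = w'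
  surj : ∀ u, Reach h2 v2 u → ∃ w, Reach h1 v1 w ∧ ι w = u
  fields : ∀ a r, Reach h1 v1 (Val.obj a) → h1 a = some r →
      ∃ a' r', ι (Val.obj a) = Val.obj a' ∧ h2 a' = some r' ∧ ∀ f, (r f).map ι = r' f
  grefFix : ∀ a, Reach h1 v1 (Val.gref a) → ι (Val.gref a) = Val.gref a

/-- Declarative specification of the copy operation `copy(v,q,g) = ⟨v',g'⟩`. -/
inductive CopySpec : Val → Place → GHeap → Val → GHeap → Prop where
  | nonObj (v : Val) (q : Place) (g : GHeap) :
      (∀ o : ObjId, v ≠ Val.obj o) → CopySpec v q g v g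
  | obj {o : ObjId} {q : Place} {g : GHeap} {h hsrc h' : Heap} {o' : ObjId} {ι : Val → Val} :
      g q = some h →
      g (home o) = some hsrc →
      (∀ a r, h a = some r → h' a = some r) →                -- h' extends h
      (∀ a : ObjId, h a = none → h' a ≠ none → home a = q) → -- fresh ids live at q
      h o' = none → h' o' ≠ none →                           -- o' is a fresh id
      GraphIso hsrc (Val.obj o) h' (Val.obj o') ι →
      (∀ w, Reach h' (Val.obj o') w →
        (∃ a : ObjId, w = Val.obj a ∧ h a = none ∧ h' a ≠ none) ∨ (∀ a : ObjId, w ≠ Val.obj a)) →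
      CopySpec (Val.obj o) q g (Val.obj o') (Function.update g q (some h'))

/-- Expression configurations: either `⟨e,h⟩` or a terminal heap (after a failure). -/
inductive EConf : Type where
  | run (e : Expr) (h : Heap)
  | done (h : Heap)

def initObj (fvs : List (FieldName × Val)) : Obj :=
  fun f => ((fvs.reverse.find? (fun fv => fv.1 == f)).map Prod.snd)

/-- Expression evaluation `⟨e,h⟩ --λ-->_p ⟨e',h'⟩ | h'`. -/
inductive EStep (p : Place) : Expr → Heap → Label → EConf → Prop where
  | newObj {fvs : List (FieldName × Val)} {o : ObjId} {h : Heap} :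
      home o = p → h o = none →
      EStep p (.newObj (fvs.map (fun fv => (fv.1, Expr.val fv.2)))) h .eps
        (.run (.val (.obj o)) (Function.update h o (some (initObj fvs))))
  | select {h : Heap} {o : ObjId} {r : Obj} {f : FieldName} {v : Val} :
      h o = some r → r f = some v →
      EStep p (.select (.val (.obj o)) f) h .eps (.run (.val v) h)
  | selectBad {h : Heap} {o : ObjId} {f : FieldName} :
      ((h o).bind (fun r => r f)) = none →
      EStep p (.select (.val (.obj o)) f) h (.excS .exBF) (.done h)
  | selectBadVal {h : Heap} {v : Val} {f : FieldName} :
      (∀ o : ObjId, v ≠ Val.obj o) →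
      EStep p (.select (.val v) f) h (.excS .exBF) (.done h)
  | globalref {h : Heap} {o : ObjId} : home o = p →
      EStep p (.globalref (.val (.obj o))) h .eps (.run (.val (.gref o)) h)
  | globalrefBad {h : Heap} {v : Val} :
      (∀ o : ObjId, v = Val.obj o → home o ≠ p) →
      EStep p (.globalref (.val v)) h (.excS .exBG) (.done h)
  | valof {h : Heap} {o : ObjId} : home o = p →
      EStep p (.valof (.val (.gref o))) h .eps (.run (.val (.obj o)) h)
  | valofBad {h : Heap} {v : Val} :
      (∀ o : ObjId, v = Val.gref o → home o ≠ p) →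
      EStep p (.valof (.val v)) h (.excS .exBG) (.done h)
  | selectCtx {e : Expr} {h : Heap} {l : Label} {e' : Expr} {h' : Heap} {f : FieldName} :
      EStep p e h l (.run e' h') →
      EStep p (.select e f) h l (.run (.select e' f) h')
  | selectCtxDone {e : Expr} {h : Heap} {l : Label} {h' : Heap} {f : FieldName} :
      EStep p e h l (.done h') →
      EStep p (.select e f) h l (.done h')
  | globalrefCtx {e : Expr} {h : Heap} {l : Label} {e' : Expr} {h' : Heap} :
      EStep p e h l (.run e' h') →
      EStep p (.globalref e) h l (.run (.globalref e') h')
  | globalrefCtxDone {e : Expr} {h : Heap} {l : Label} {h' : Heap} :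
      EStep p e h l (.done h') →
      EStep p (.globalref e) h l (.done h')
  | valofCtx {e : Expr} {h : Heap} {l : Label} {e' : Expr} {h' : Heap} :
      EStep p e h l (.run e' h') →
      EStep p (.valof e) h l (.run (.valof e') h')
  | valofCtxDone {e : Expr} {h : Heap} {l : Label} {h' : Heap} :
      EStep p e h l (.done h') →
      EStep p (.valof e) h l (.done h')
  | newObjCtx {fvs : List (FieldName × Val)} {f : FieldName} {e : Expr}
      {rest : List (FieldName × Expr)} {h : Heap} {l : Label} {e' : Expr} {h' : Heap} :
      EStep p e h l (.run e' h') →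
      EStep p (.newObj (fvs.map (fun fv => (fv.1, Expr.val fv.2)) ++ (f, e) :: rest)) h l
        (.run (.newObj (fvs.map (fun fv => (fv.1, Expr.val fv.2)) ++ (f, e') :: rest)) h')
  | newObjCtxDone {fvs : List (FieldName × Val)} {f : FieldName} {e : Expr}
      {rest : List (FieldName × Expr)} {h : Heap} {l : Label} {h' : Heap} :
      EStep p e h l (.done h') →
      EStep p (.newObj (fvs.map (fun fv => (fv.1, Expr.val fv.2)) ++ (f, e) :: rest)) h l (.done h')

/-- Statement configurations: `⟨s,g⟩` or a terminal global heap `g`. -/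
inductive Config : Type where
  | run (s : Stmt) (g : GHeap)
  | done (g : GHeap)

/-- Exception masking performed by `async`: synchronous exceptions become asynchronous. -/
def maskAsync : Label → Label
  | .eps => .eps
  | .excA v => .excA v
  | .excS v => .excA v

/-- `μ ∪ λ`: recording of an exception label into the state of `finish`. -/
def addLabel (μ : List Val) : Label → List Val
  | .eps => μ
  | .excA v => v :: μ
  | .excS v => v :: μ

/-- Label produced by (End of Finish); `dead` records whether the local place failed. -/
def endLabel (dead : Bool) (μ : List Val) : Label → Label
  | .eps => if μ = [] then .eps else if dead then .excS .exDP else .excS .exE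
  | _ => if dead then .excS .exDP else .excS .exE

/-- Label transformation performed by (At): a remote synchronous exception is masked
by a DeadPlaceException when the home place is failed. -/
def atLabel (dead : Bool) : Label → Label
  | .excS v => if dead then .excS .exDP else .excS v
  | l => l

/-- `l` is not a synchronous-exception label (i.e. `l ∈ {ε, v×}`). -/
def isNotSync : Label → Prop
  | .excS _ => False
  | _ => True

/-- The small-step transition relation `⟨s,g⟩ --λ-->_p ⟨s',g'⟩ | g'`.
The flag `res` enables the additional rules of Resilient TX10 (place failure and the
behaviour of constructs at failed places); with `res = false` (and total heaps) this is
exactly the TX10 semantics. -/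
inductive Step : Bool → Place → Stmt → GHeap → Label → Config → Prop where
  -- (Skip)
  | skip {res : Bool} {p : Place} {g : GHeap} :
      g p ≠ none → Step res p .skip g .eps (.done g)
  -- (Exception)
  | throw {res : Bool} {p : Place} {g : GHeap} {v : Val} :
      g p ≠ none → Step res p (.throw v) g (.excS v) (.done g)
  -- (Declare Val)
  | declVal {res : Bool} {p : Place} {g : GHeap} {x : VarName} {v : Val} {s : Stmt}
      {l : Label} {k : Config} :
      g p ≠ none → Step res p (subst x v s) g l k →
      Step res p (.bind x (.val v) s) g l k
  -- (Field Update)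
  | fieldUpdate {res : Bool} {p : Place} {g : GHeap} {h : Heap} {o : ObjId} {r : Obj}
      {f : FieldName} {v : Val} :
      g p = some h → h o = some r → (r f).isSome →
      Step res p (.assign (.val (.obj o)) f (.val v)) g .eps
        (.done (Function.update g p (some (Function.update h o (some (Function.update r f (some v)))))))
  -- (Bad Field Update)
  | fieldUpdateBad {res : Bool} {p : Place} {g : GHeap} {h : Heap} {o : ObjId}
      {f : FieldName} {v : Val} :
      g p = some h → ((h o).bind (fun r => r f)) = none →
      Step res p (.assign (.val (.obj o)) f (.val v)) g (.excS .exBF) (.done g)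
  | fieldUpdateBadVal {res : Bool} {p : Place} {g : GHeap} {w : Val} {f : FieldName} {e2 : Expr} :
      g p ≠ none → (∀ o : ObjId, w ≠ Val.obj o) →
      Step res p (.assign (.val w) f e2) g (.excS .exBF) (.done g)
  -- (Ctx): expression evaluation inside statements
  | ctxBind {res : Bool} {p : Place} {g : GHeap} {h : Heap} {x : VarName} {e : Expr}
      {s : Stmt} {l : Label} {e' : Expr} {h' : Heap} :
      g p = some h → EStep p e h l (.run e' h') →
      Step res p (.bind x e s) g l (.run (.bind x e' s) (Function.update g p (some h')))
  | ctxBindDone {res : Bool} {p : Place} {g : GHeap} {h : Heap} {x : VarName} {e : Expr}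
      {s : Stmt} {l : Label} {h' : Heap} :
      g p = some h → EStep p e h l (.done h') →
      Step res p (.bind x e s) g l (.done (Function.update g p (some h')))
  | ctxAssignL {res : Bool} {p : Place} {g : GHeap} {h : Heap} {e1 : Expr} {f : FieldName}
      {e2 : Expr} {l : Label} {e1' : Expr} {h' : Heap} :
      g p = some h → EStep p e1 h l (.run e1' h') →
      Step res p (.assign e1 f e2) g l (.run (.assign e1' f e2) (Function.update g p (some h')))
  | ctxAssignLDone {res : Bool} {p : Place} {g : GHeap} {h : Heap} {e1 : Expr} {f : FieldName}
      {e2 : Expr} {l : Label} {h' : Heap} :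
      g p = some h → EStep p e1 h l (.done h') →
      Step res p (.assign e1 f e2) g l (.done (Function.update g p (some h')))
  | ctxAssignR {res : Bool} {p : Place} {g : GHeap} {h : Heap} {o : ObjId} {f : FieldName}
      {e2 : Expr} {l : Label} {e2' : Expr} {h' : Heap} :
      g p = some h → EStep p e2 h l (.run e2' h') →
      Step res p (.assign (.val (.obj o)) f e2) g l
        (.run (.assign (.val (.obj o)) f e2') (Function.update g p (some h')))
  | ctxAssignRDone {res : Bool} {p : Place} {g : GHeap} {h : Heap} {o : ObjId} {f : FieldName}
      {e2 : Expr} {l : Label} {h' : Heap} :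
      g p = some h → EStep p e2 h l (.done h') →
      Step res p (.assign (.val (.obj o)) f e2) g l (.done (Function.update g p (some h')))
  | ctxAtE {res : Bool} {p q : Place} {g : GHeap} {h : Heap} {x : VarName} {e : Expr}
      {s : Stmt} {l : Label} {e' : Expr} {h' : Heap} :
      g p = some h → EStep p e h l (.run e' h') →
      Step res p (.atE q x e s) g l (.run (.atE q x e' s) (Function.update g p (some h')))
  | ctxAtEDone {res : Bool} {p q : Place} {g : GHeap} {h : Heap} {x : VarName} {e : Expr}
      {s : Stmt} {l : Label} {h' : Heap} :
      g p = some h → EStep p e h l (.done h') →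
      Step res p (.atE q x e s) g l (.done (Function.update g p (some h')))
  -- (Place Shift)
  | placeShift {res : Bool} {p q : Place} {g : GHeap} {x : VarName} {v v' : Val}
      {s : Stmt} {g' : GHeap} :
      g p ≠ none → g q ≠ none → CopySpec v q g v' g' →
      Step res p (.atE q x (.val v) s) g .eps
        (.run (.atD q (.seq (subst x v' s) .skip)) g')
  | placeShiftDeadTgt {p q : Place} {g : GHeap} {x : VarName} {e : Expr} {s : Stmt} :
      g q = none →
      Step true p (.atE q x e s) g (.excS .exDP) (.done g)
  | placeShiftDeadSrc {p q : Place} {g : GHeap} {x : VarName} {e : Expr} {s : Stmt} :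
      g p = none →
      Step true p (.atE q x e s) g (.excS .exDP) (.done g)
  -- (Spawn)
  | spawn {res : Bool} {p : Place} {g : GHeap} {s : Stmt} :
      g p ≠ none → Step res p (.async s) g .eps (.run (.spawned s) g)
  | spawnDead {p : Place} {g : GHeap} {s : Stmt} :
      g p = none → Step true p (.async s) g (.excS .exDP) (.done g)
  -- (Async)
  | asyncRun {res : Bool} {p : Place} {s : Stmt} {g : GHeap} {l : Label} {s' : Stmt} {g' : GHeap} :
      Step res p s g l (.run s' g') →
      Step res p (.spawned s) g (maskAsync l) (.run (.spawned s') g')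
  | asyncDone {res : Bool} {p : Place} {s : Stmt} {g : GHeap} {l : Label} {g' : GHeap} :
      Step res p s g l (.done g') →
      Step res p (.spawned s) g (maskAsync l) (.done g')
  -- (Finish)
  | finishStep {res : Bool} {p : Place} {s : Stmt} {g : GHeap} {l : Label} {s' : Stmt}
      {g' : GHeap} {μ : List Val} :
      Step res p s g l (.run s' g') →
      Step res p (.finish μ s) g .eps (.run (.finish (addLabel μ l) s') g')
  -- (End of Finish)
  | finishEnd {res : Bool} {p : Place} {s : Stmt} {g : GHeap} {l : Label} {g' : GHeap}
      {μ : List Val} :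
      Step res p s g l (.done g') →
      Step res p (.finish μ s) g (endLabel (g p).isNone μ l) (.done g')
  -- (Seq)
  | seqStep {res : Bool} {p : Place} {s : Stmt} {g : GHeap} {l : Label} {s' : Stmt}
      {g' : GHeap} {t : Stmt} :
      Step res p s g l (.run s' g') → isNotSync l →
      Step res p (.seq s t) g l (.run (.seq s' t) g')
  | seqStepSync {res : Bool} {p : Place} {s : Stmt} {g : GHeap} {v : Val} {s' : Stmt}
      {g' : GHeap} {t : Stmt} :
      Step res p s g (.excS v) (.run s' g') →
      Step res p (.seq s t) g (.excS v) (.run s' g')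
  -- (Seq Term)
  | seqTerm {res : Bool} {p : Place} {s : Stmt} {g : GHeap} {l : Label} {g' : GHeap} {t : Stmt} :
      g p ≠ none → Step res p s g l (.done g') → isNotSync l →
      Step res p (.seq s t) g l (.run t g')
  | seqTermSync {res : Bool} {p : Place} {s : Stmt} {g : GHeap} {v : Val} {g' : GHeap} {t : Stmt} :
      g p ≠ none → Step res p s g (.excS v) (.done g') →
      Step res p (.seq s t) g (.excS v) (.done g')
  -- (Par)
  | par {res : Bool} {p : Place} {s : Stmt} {g : GHeap} {l : Label} {s' : Stmt}
      {g' : GHeap} {t : Stmt} :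
      isAsync t → Step res p s g l (.run s' g') →
      Step res p (.seq t s) g l (.run (.seq t s') g')
  | parTerm {res : Bool} {p : Place} {s : Stmt} {g : GHeap} {l : Label} {g' : GHeap} {t : Stmt} :
      isAsync t → Step res p s g l (.done g') →
      Step res p (.seq t s) g l (.run t g')
  -- (Seq Failed Term)
  | seqFailedSync {p : Place} {s : Stmt} {g : GHeap} {l : Label} {g' : GHeap} {t : Stmt} :
      g p = none → isSync s → Step true p s g l (.done g') →
      Step true p (.seq s t) g (.excS .exDP) (.done g')
  | seqFailedAsync {p : Place} {s : Stmt} {g : GHeap} {l : Label} {g' : GHeap} {t : Stmt} :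
      g p = none → isAsync s → Step true p s g l (.done g') →
      Step true p (.seq s t) g (.excA .exDP) (.run t g')
  -- (At)
  | atRun {res : Bool} {p q : Place} {s : Stmt} {g : GHeap} {l : Label} {s' : Stmt} {g' : GHeap} :
      Step res q s g l (.run s' g') →
      Step res p (.atD q s) g (atLabel (g p).isNone l) (.run (.atD q s') g')
  | atDone {res : Bool} {p q : Place} {s : Stmt} {g : GHeap} {l : Label} {g' : GHeap} :
      Step res q s g l (.done g') →
      Step res p (.atD q s) g (atLabel (g p).isNone l) (.done g')
  -- (Try)
  | tryStep {res : Bool} {p : Place} {s : Stmt} {g : GHeap} {l : Label} {s' : Stmt}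
      {g' : GHeap} {t : Stmt} :
      Step res p s g l (.run s' g') → isNotSync l →
      Step res p (.tryCatch s t) g l (.run (.tryCatch s' t) g')
  | tryStepDone {res : Bool} {p : Place} {s : Stmt} {g : GHeap} {l : Label} {g' : GHeap} {t : Stmt} :
      Step res p s g l (.done g') → isNotSync l →
      Step res p (.tryCatch s t) g l (.done g')
  | tryHandle {res : Bool} {p : Place} {s : Stmt} {g : GHeap} {v : Val} {s' : Stmt}
      {g' : GHeap} {t : Stmt} :
      g p ≠ none → Step res p s g (.excS v) (.run s' g') →
      Step res p (.tryCatch s t) g .eps (.run (.seq s' t) g')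
  | tryHandleDone {res : Bool} {p : Place} {s : Stmt} {g : GHeap} {v : Val} {g' : GHeap} {t : Stmt} :
      g p ≠ none → Step res p s g (.excS v) (.done g') →
      Step res p (.tryCatch s t) g .eps (.run t g')
  | tryDead {p : Place} {s : Stmt} {g : GHeap} {v : Val} {s' : Stmt} {g' : GHeap} {t : Stmt} :
      g p = none → Step true p s g (.excS v) (.run s' g') →
      Step true p (.tryCatch s t) g (.excS v) (.run s' g')
  | tryDeadDone {p : Place} {s : Stmt} {g : GHeap} {v : Val} {g' : GHeap} {t : Stmt} :
      g p = none → Step true p s g (.excS v) (.done g') →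
      Step true p (.tryCatch s t) g (.excS v) (.done g')
  -- (Place Failure): any non-zero live place may fail at any moment
  | placeFailure {p : Place} {s : Stmt} {g : GHeap} :
      p ≠ 0 → g p ≠ none →
      Step true p s g .eps (.run s (Function.update g p none))
  -- (Local Failure): basic statements at a failed place
  | localSkip {p : Place} {g : GHeap} :
      g p = none → Step true p .skip g (.excS .exDP) (.done g)
  | localThrow {p : Place} {g : GHeap} {v : Val} :
      g p = none → Step true p (.throw v) g (.excS .exDP) (.done g)
  | localBind {p : Place} {g : GHeap} {x : VarName} {e : Expr} {s : Stmt} :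
      g p = none → Step true p (.bind x e s) g (.excS .exDP) (.done g)
  | localAssign {p : Place} {g : GHeap} {e1 : Expr} {f : FieldName} {e2 : Expr} :
      g p = none → Step true p (.assign e1 f e2) g (.excS .exDP) (.done g)

/-- Closedness of expressions with respect to a list of bound variables. -/
inductive ClosedE (Γ : List VarName) : Expr → Prop where
  | val (v : Val) : ClosedE Γ (.val v)
  | var {x : VarName} : x ∈ Γ → ClosedE Γ (.var x)
  | select {e : Expr} (f : FieldName) : ClosedE Γ e → ClosedE Γ (.select e f)
  | newObj {fs : List (FieldName × Expr)} :
      (∀ fe ∈ fs, ClosedE Γ fe.2) → ClosedE Γ (.newObj fs)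
  | globalref {e : Expr} : ClosedE Γ e → ClosedE Γ (.globalref e)
  | valof {e : Expr} : ClosedE Γ e → ClosedE Γ (.valof e)

/-- Closedness of statements with respect to a list of bound variables. -/
inductive Closed : List VarName → Stmt → Prop where
  | skip {Γ : List VarName} : Closed Γ .skip
  | throw {Γ : List VarName} (v : Val) : Closed Γ (.throw v)
  | bind {Γ : List VarName} {x : VarName} {e : Expr} {s : Stmt} :
      ClosedE Γ e → Closed (x :: Γ) s → Closed Γ (.bind x e s)
  | assign {Γ : List VarName} {e1 : Expr} {f : FieldName} {e2 : Expr} :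
      ClosedE Γ e1 → ClosedE Γ e2 → Closed Γ (.assign e1 f e2)
  | seq {Γ : List VarName} {s t : Stmt} : Closed Γ s → Closed Γ t → Closed Γ (.seq s t)
  | atE {Γ : List VarName} {p : Place} {x : VarName} {e : Expr} {s : Stmt} :
      ClosedE Γ e → Closed (x :: Γ) s → Closed Γ (.atE p x e s)
  | async {Γ : List VarName} {s : Stmt} : Closed Γ s → Closed Γ (.async s)
  | finish {Γ : List VarName} {μ : List Val} {s : Stmt} : Closed Γ s → Closed Γ (.finish μ s)
  | tryCatch {Γ : List VarName} {s t : Stmt} : Closed Γ s → Closed Γ t → Closed Γ (.tryCatch s t)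
  | atD {Γ : List VarName} {p : Place} {s : Stmt} : Closed Γ s → Closed Γ (.atD p s)
  | spawned {Γ : List VarName} {s : Stmt} : Closed Γ s → Closed Γ (.spawned s)

/-- All local heaps of `g` have finite domains (as is the case for heaps built at runtime). -/
def FiniteHeaps (g : GHeap) : Prop :=
  ∀ p h, g p = some h → Set.Finite {o : ObjId | h o ≠ none}

/-- A value is an admissible reference at place `q` in local heap `h`:
local object ids must be `q`-local and allocated; global references are unrestricted. -/
def okRef (q : Place) (h : Heap) : Val → Prop
  | .obj a => home a = q ∧ h a ≠ none
  | _ => True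

/-- Place-locality of a global heap. -/
def PlaceLocalG (g : GHeap) : Prop :=
  ∀ q h, g q = some h → ∀ o : ObjId, h o ≠ none →
    home o = q ∧ ∀ w, Reach h (.obj o) w → okRef q h w

/-- Values occurring in an expression. -/
inductive OccE : Expr → Val → Prop where
  | val (v : Val) : OccE (.val v) v
  | select {e : Expr} {v : Val} (f : FieldName) : OccE e v → OccE (.select e f) v
  | newObj {fs : List (FieldName × Expr)} {fe : FieldName × Expr} {v : Val} :
      fe ∈ fs → OccE fe.2 v → OccE (.newObj fs) v
  | globalref {e : Expr} {v : Val} : OccE e v → OccE (.globalref e) v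
  | valof {e : Expr} {v : Val} : OccE e v → OccE (.valof e) v

/-- Values occurring anywhere in a statement. -/
inductive OccS : Stmt → Val → Prop where
  | throw (v : Val) : OccS (.throw v) v
  | bindE {x e s v} : OccE e v → OccS (.bind x e s) v
  | bindS {x e s v} : OccS s v → OccS (.bind x e s) v
  | assignL {e1 f e2 v} : OccE e1 v → OccS (.assign e1 f e2) v
  | assignR {e1 f e2 v} : OccE e2 v → OccS (.assign e1 f e2) v
  | seqL {s t v} : OccS s v → OccS (.seq s t) v
  | seqR {s t v} : OccS t v → OccS (.seq s t) v
  | atEE {p x e s v} : OccE e v → OccS (.atE p x e s) v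
  | atES {p x e s v} : OccS s v → OccS (.atE p x e s) v
  | async {s v} : OccS s v → OccS (.async s) v
  | finishMu {μ s v} : v ∈ μ → OccS (.finish μ s) v
  | finishS {μ s v} : OccS s v → OccS (.finish μ s) v
  | tryL {s t v} : OccS s v → OccS (.tryCatch s t) v
  | tryR {s t v} : OccS t v → OccS (.tryCatch s t) v
  | atD {p s v} : OccS s v → OccS (.atD p s) v
  | spawned {s v} : OccS s v → OccS (.spawned s) v

/-- Values occurring in a statement *not* under any `at`/`atD` construct. -/
inductive OccTop : Stmt → Val → Prop where
  | throw (v : Val) : OccTop (.throw v) v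
  | bindE {x e s v} : OccE e v → OccTop (.bind x e s) v
  | bindS {x e s v} : OccTop s v → OccTop (.bind x e s) v
  | assignL {e1 f e2 v} : OccE e1 v → OccTop (.assign e1 f e2) v
  | assignR {e1 f e2 v} : OccE e2 v → OccTop (.assign e1 f e2) v
  | seqL {s t v} : OccTop s v → OccTop (.seq s t) v
  | seqR {s t v} : OccTop t v → OccTop (.seq s t) v
  | atEE {p x e s v} : OccE e v → OccTop (.atE p x e s) v
  | async {s v} : OccTop s v → OccTop (.async s) v
  | finishMu {μ s v} : v ∈ μ → OccTop (.finish μ s) v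
  | finishS {μ s v} : OccTop s v → OccTop (.finish μ s) v
  | tryL {s t v} : OccTop s v → OccTop (.tryCatch s t) v
  | tryR {s t v} : OccTop t v → OccTop (.tryCatch s t) v
  | spawned {s v} : OccTop s v → OccTop (.spawned s) v

/-- `OccUnder s p v`: value `v` occurs in `s` with innermost enclosing `at` place `p`. -/
inductive OccUnder : Stmt → Place → Val → Prop where
  | atETop {p x e s v} : OccTop s v → OccUnder (.atE p x e s) p v
  | atEDeep {p x e s q v} : OccUnder s q v → OccUnder (.atE p x e s) q v
  | atDTop {p s v} : OccTop s v → OccUnder (.atD p s) p v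
  | atDDeep {p s q v} : OccUnder s q v → OccUnder (.atD p s) q v
  | bindS {x e s q v} : OccUnder s q v → OccUnder (.bind x e s) q v
  | seqL {s t q v} : OccUnder s q v → OccUnder (.seq s t) q v
  | seqR {s t q v} : OccUnder t q v → OccUnder (.seq s t) q v
  | async {s q v} : OccUnder s q v → OccUnder (.async s) q v
  | finishS {μ s q v} : OccUnder s q v → OccUnder (.finish μ s) q v
  | tryL {s t q v} : OccUnder s q v → OccUnder (.tryCatch s t) q v
  | tryR {s t q v} : OccUnder t q v → OccUnder (.tryCatch s t) q v
  | spawned {s q v} : OccUnder s q v → OccUnder (.spawned s) q v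

/-- Place-locality of a configuration `⟨s,g⟩`. -/
def ConfLocal (s : Stmt) (g : GHeap) : Prop :=
  PlaceLocalG g ∧
  (∀ (p : Place) (o : ObjId), OccUnder s p (.obj o) → ∃ h, g p = some h ∧ h o ≠ none) ∧
  (∀ a : ObjId, OccS s (.gref a) → ∃ h, g (home a) = some h ∧ h a ≠ none)

/-- Evaluation contexts. -/
inductive ECtx : (Stmt → Stmt) → Prop where
  | hole : ECtx id
  | seqL {E : Stmt → Stmt} (t : Stmt) : ECtx E → ECtx (fun s => .seq (E s) t)
  | seqR {E : Stmt → Stmt} {t : Stmt} : isAsync t → ECtx E → ECtx (fun s => .seq t (E s))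
  | atD {E : Stmt → Stmt} (p : Place) : ECtx E → ECtx (fun s => .atD p (E s))
  | spawned {E : Stmt → Stmt} : ECtx E → ECtx (fun s => .spawned (E s))
  | finish {E : Stmt → Stmt} (μ : List Val) : ECtx E → ECtx (fun s => .finish μ (E s))
  | tryCatch {E : Stmt → Stmt} (t : Stmt) : ECtx E → ECtx (fun s => .tryCatch (E s) t)

/-- One step between configurations. -/
def CStep (res : Bool) (p : Place) (l : Label) (k k' : Config) : Prop :=
  ∃ s g, k = .run s g ∧ Step res p s g l k'

/-- Any number of ε-steps. -/
def EpsStar (res : Bool) (p : Place) : Config → Config → Prop :=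
  Relation.ReflTransGen (CStep res p .eps)

/-- Weak transition `==λ==>_p`. -/
def WStep (res : Bool) (p : Place) (l : Label) (k k' : Config) : Prop :=
  match l with
  | .eps => EpsStar res p k k'
  | _ => ∃ k1 k2, EpsStar res p k k1 ∧ CStep res p l k1 k2 ∧ EpsStar res p k2 k'

/-- Environment moves: concurrent-context updates of the shared heap.  For TX10
(`res = false`) the domain of places is preserved; for Resilient TX10 (`res = true`)
the domain may shrink (places may fail). -/
def EnvMove (res : Bool) (Φ : GHeap → GHeap) : Prop :=
  (∀ g, PlaceLocalG g → PlaceLocalG (Φ g)) ∧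
  (∀ g p, if res then ((Φ g p).isSome → (g p).isSome) else ((Φ g p).isSome ↔ (g p).isSome)) ∧
  (∀ g p h h', g p = some h → Φ g p = some h' → ∀ o : ObjId, h o ≠ none → h' o ≠ none)

/-- `R` is a weak bisimulation on closed configurations. -/
def IsWeakBisim (res : Bool) (R : Config → Config → Prop) : Prop :=
  ∀ k1 k2, R k1 k2 →
    ((∃ g, k1 = .done g ∧ k2 = .done g) ∨
     (∃ s t g, k1 = .run s g ∧ k2 = .run t g ∧
       (isSync s ↔ isSync t) ∧
       (∀ Φ, EnvMove res Φ → ∀ p : Place,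
         (∀ l s' g', Step res p s (Φ g) l (.run s' g') →
            ∃ t', WStep res p l (.run t (Φ g)) (.run t' g') ∧ R (.run s' g') (.run t' g')) ∧
         (∀ l g', Step res p s (Φ g) l (.done g') → WStep res p l (.run t (Φ g)) (.done g')) ∧
         (∀ l t' g', Step res p t (Φ g) l (.run t' g') →
            ∃ s', WStep res p l (.run s (Φ g)) (.run s' g') ∧ R (.run s' g') (.run t' g')) ∧
         (∀ l g', Step res p t (Φ g) l (.done g') → WStep res p l (.run s (Φ g)) (.done g')))))

/-- Weak bisimilarity: the largest weak bisimulation. -/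
def Bisim (res : Bool) (k1 k2 : Config) : Prop :=
  ∃ R, IsWeakBisim res R ∧ R k1 k2

/-- Statement contexts built from the TX10 constructs. -/
inductive SCtx : (Stmt → Stmt) → Prop where
  | hole : SCtx id
  | seqL {C : Stmt → Stmt} (t : Stmt) : SCtx C → SCtx (fun s => .seq (C s) t)
  | seqR {C : Stmt → Stmt} (t : Stmt) : SCtx C → SCtx (fun s => .seq t (C s))
  | async {C : Stmt → Stmt} : SCtx C → SCtx (fun s => .async (C s))
  | spawned {C : Stmt → Stmt} : SCtx C → SCtx (fun s => .spawned (C s))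
  | finish {C : Stmt → Stmt} (μ : List Val) : SCtx C → SCtx (fun s => .finish μ (C s))
  | atE {C : Stmt → Stmt} (p : Place) (x : VarName) (e : Expr) :
      SCtx C → SCtx (fun s => .atE p x e (C s))
  | atD {C : Stmt → Stmt} (p : Place) : SCtx C → SCtx (fun s => .atD p (C s))
  | tryL {C : Stmt → Stmt} (t : Stmt) : SCtx C → SCtx (fun s => .tryCatch (C s) t)
  | tryR {C : Stmt → Stmt} (t : Stmt) : SCtx C → SCtx (fun s => .tryCatch t (C s))

/-- `s` has no sub-term of the form `async s'`. -/
def NoAsync : Stmt → Prop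
  | .skip => True
  | .throw _ => True
  | .bind _ _ s => NoAsync s
  | .assign _ _ _ => True
  | .seq s t => NoAsync s ∧ NoAsync t
  | .atE _ _ _ s => NoAsync s
  | .async _ => False
  | .finish _ s => NoAsync s
  | .tryCatch s t => NoAsync s ∧ NoAsync t
  | .atD _ s => NoAsync s
  | .spawned s => NoAsync s

/-- `s` has no active remote computation: no substatement of the form `atD q s'`. -/
def IsLocalS : Stmt → Prop
  | .skip => True
  | .throw _ => True
  | .bind _ _ s => IsLocalS s
  | .assign _ _ _ => True
  | .seq s t => IsLocalS s ∧ IsLocalS t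
  | .atE _ _ _ s => IsLocalS s
  | .async s => IsLocalS s
  | .finish _ s => IsLocalS s
  | .tryCatch s t => IsLocalS s ∧ IsLocalS t
  | .atD _ _ => False
  | .spawned s => IsLocalS s

/-- `IsRemote p s`: every basic statement of `s` occurs under `atD q` for some `q ≠ p`. -/
inductive IsRemote (p : Place) : Stmt → Prop where
  | atD {q : Place} {s : Stmt} : q ≠ p → IsRemote p (.atD q s)
  | seq {s t : Stmt} : IsRemote p s → IsRemote p t → IsRemote p (.seq s t)
  | spawned {s : Stmt} : IsRemote p s → IsRemote p (.spawned s)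
  | finish {μ : List Val} {s : Stmt} : IsRemote p s → IsRemote p (.finish μ s)
  | tryCatch {s t : Stmt} : IsRemote p s → IsRemote p t → IsRemote p (.tryCatch s t)

/-- Substatement relation (reflexive containment). -/
inductive SubStmt : Stmt → Stmt → Prop where
  | refl (s : Stmt) : SubStmt s s
  | bind {u s : Stmt} {x e} : SubStmt u s → SubStmt u (.bind x e s)
  | seqL {u s t : Stmt} : SubStmt u s → SubStmt u (.seq s t)
  | seqR {u s t : Stmt} : SubStmt u t → SubStmt u (.seq s t)
  | atE {u s : Stmt} {p x e} : SubStmt u s → SubStmt u (.atE p x e s)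
  | async {u s : Stmt} : SubStmt u s → SubStmt u (.async s)
  | finish {u s : Stmt} {μ} : SubStmt u s → SubStmt u (.finish μ s)
  | tryL {u s t : Stmt} : SubStmt u s → SubStmt u (.tryCatch s t)
  | tryR {u s t : Stmt} : SubStmt u t → SubStmt u (.tryCatch s t)
  | atD {u s : Stmt} {p} : SubStmt u s → SubStmt u (.atD p s)
  | spawned {u s : Stmt} : SubStmt u s → SubStmt u (.spawned s)

/-- Application of a variable substitution (a finite list of bindings). -/
def applySub (ρ : List (VarName × Val)) (s : Stmt) : Stmt :=
  ρ.foldr (fun xv t => subst xv.1 xv.2 t) s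

/-- The happens-before relation of `s1, s2` inside program `s0`, for the semantics
selected by `res` (traces are sequences of transitions at place 0). -/
def HB (res : Bool) (s0 s1 s2 : Stmt) : Prop :=
  ∀ (n : ℕ) (S : ℕ → Config) (g0 : GHeap),
    S 0 = .run s0 g0 →
    (∀ i, i < n → ∃ l, CStep res 0 l (S i) (S (i+1))) →
    (∃ (E : Stmt → Stmt) (ρ : List (VarName × Val)) (g : GHeap),
        ECtx E ∧ S n = .run (E (applySub ρ s2)) g) →
    ∃ i, i ≤ n ∧ ∃ (E' : Stmt → Stmt) (ρ' : List (VarName × Val)) (g' : GHeap),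
        ECtx E' ∧ S i = .run (E' (applySub ρ' s1)) g'

/-- A value is well-formed in `g`: the object graph rooted at it has no dangling pointers. -/
def WFVal (v : Val) (g : GHeap) : Prop :=
  ∀ o : ObjId, v = Val.obj o →
    ∃ h, g (home o) = some h ∧ ∀ a : ObjId, Reach h (.obj o) (.obj a) → h a ≠ none

/-!
Progress is proved by well-founded induction on the size of the statement skeleton. Substitution
does not change that size, so the rule for `val x = v s` may appeal to `s[v/x]`, and it preserves
closedness, so evaluation never meets a free variable. At a live place every basic statement has
a rule (a normal step or a synchronous exception such as BadFieldSelection), and every compound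
statement steps as soon as its active component does, whatever the label of that step. The only
non-syntactic ingredients are fresh object ids, which exist because heaps are finite, and the copy
of the place shift, realised by copying the whole source heap into fresh ids at the target place.
-/

theorem ClosedE.mono {Γ Γ' : List VarName} {e : Expr} (h : ClosedE Γ e) (hsub : Γ ⊆ Γ') :
    ClosedE Γ' e := by
  induction h with
  | val v => exact .val v
  | var hx => exact .var (hsub hx)
  | select f _ ih => exact .select f ih
  | newObj _ ih => exact .newObj ih
  | globalref _ ih => exact .globalref ih
  | valof _ ih => exact .valof ih

theorem Closed.mono {Γ Γ' : List VarName} {s : Stmt} (h : Closed Γ s) (hsub : Γ ⊆ Γ') :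
    Closed Γ' s := by
  induction h generalizing Γ' with
  | skip => exact .skip
  | throw v => exact .throw v
  | bind he _ ih => exact .bind (he.mono hsub) (ih (List.cons_subset_cons _ hsub))
  | assign h₁ h₂ => exact .assign (h₁.mono hsub) (h₂.mono hsub)
  | seq _ _ ih₁ ih₂ => exact .seq (ih₁ hsub) (ih₂ hsub)
  | atE he _ ih => exact .atE (he.mono hsub) (ih (List.cons_subset_cons _ hsub))
  | async _ ih => exact .async (ih hsub)
  | finish _ ih => exact .finish (ih hsub)
  | tryCatch _ _ ih₁ ih₂ => exact .tryCatch (ih₁ hsub) (ih₂ hsub)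
  | atD _ ih => exact .atD (ih hsub)
  | spawned _ ih => exact .spawned (ih hsub)

theorem ClosedE.substE {x : VarName} {v : Val} {Γ : List VarName} {e : Expr}
    (h : ClosedE (x :: Γ) e) : ClosedE Γ (substE x v e) := by
  induction h with
  | val w => rw [TX10.substE]; exact .val w
  | @var y hy =>
    rw [TX10.substE]
    split_ifs with hyx
    · exact .val v
    · exact .var ((List.mem_cons.1 hy).resolve_left hyx)
  | select f _ ih => rw [TX10.substE]; exact .select f ih
  | newObj _ ih =>
    rw [TX10.substE]
    refine .newObj fun fe hfe => ?_
    obtain ⟨⟨_, hmem⟩, -, rfl⟩ := List.mem_map.1 hfe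
    exact ih _ hmem
  | globalref _ ih => rw [TX10.substE]; exact .globalref ih
  | valof _ ih => rw [TX10.substE]; exact .valof ih

theorem Closed.subst {x : VarName} {v : Val} {Γ Δ : List VarName} {s : Stmt}
    (h : Closed Δ s) (hsub : Δ ⊆ x :: Γ) : Closed Γ (subst x v s) := by
  induction h generalizing Γ with
  | skip => exact .skip
  | throw w => exact .throw w
  | @bind _ y _ _ he hs ih =>
    rw [TX10.subst]
    refine .bind (he.mono hsub).substE ?_
    split_ifs with hyx
    · exact hs.mono (by subst hyx; simpa [List.cons_subset] using hsub)
    · exact ih (by simp [List.cons_subset] at hsub ⊢; grind)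
  | assign h₁ h₂ =>
    rw [TX10.subst]
    exact .assign (h₁.mono hsub).substE (h₂.mono hsub).substE
  | seq _ _ ih₁ ih₂ => exact .seq (ih₁ hsub) (ih₂ hsub)
  | @atE _ _ y _ _ he hs ih =>
    rw [TX10.subst]
    refine .atE (he.mono hsub).substE ?_
    split_ifs with hyx
    · exact hs.mono (by subst hyx; simpa [List.cons_subset] using hsub)
    · exact ih (by simp [List.cons_subset] at hsub ⊢; grind)
  | async _ ih => exact .async (ih hsub)
  | finish _ ih => exact .finish (ih hsub)
  | tryCatch _ _ ih₁ ih₂ => exact .tryCatch (ih₁ hsub) (ih₂ hsub)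
  | atD _ ih => exact .atD (ih hsub)
  | spawned _ ih => exact .spawned (ih hsub)

/-- Expressions are not counted, so that substitution preserves the size. -/
def Stmt.size : Stmt → ℕ
  | .skip | .throw _ | .assign _ _ _ => 1
  | .bind _ _ s | .atE _ _ _ s | .async s | .finish _ s | .atD _ s | .spawned s => s.size + 1
  | .seq s t | .tryCatch s t => s.size + t.size + 1

theorem Stmt.size_subst (x : VarName) (v : Val) (s : Stmt) : (subst x v s).size = s.size := by
  induction s <;> simp [TX10.subst, Stmt.size, apply_ite Stmt.size, *]

theorem exists_forall_ge_fresh (p : Place) {h : Heap} (hfin : {o : ObjId | h o ≠ none}.Finite) :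
    ∃ N : ℕ, ∀ n ≥ N, h (p, n) = none := by
  obtain ⟨N, hN⟩ := (hfin.preimage (Prod.mk_right_injective p).injOn).bddAbove
  exact ⟨N + 1, fun n hn => by_contra fun hc => absurd (hN hc) (by omega)⟩

section Copy

def renameVal (ren : ObjId → ObjId) : Val → Val
  | .obj a => .obj (ren a)
  | w => w

variable {ren : ObjId → ObjId}

theorem renameVal_injective (hren : Function.Injective ren) :
    Function.Injective (renameVal ren) := by
  intro w w' h
  cases w <;> cases w' <;> simp_all [renameVal, hren.eq_iff]

theorem renameVal_eq_obj_iff {w : Val} {a : ObjId} :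
    renameVal ren w = .obj a ↔ ∃ b, w = .obj b ∧ ren b = a := by
  cases w <;> simp [renameVal]

/-- `h` together with a copy of all of `hsrc`, renamed by `ren`. An id unallocated in `hsrc`
becomes an empty object, so that every renamed id is allocated. -/
noncomputable def copyHeap (ren : ObjId → ObjId) (hsrc h : Heap) : Heap :=
  Function.extend ren (fun b => some fun f => ((hsrc b).bind (· f)).map (renameVal ren)) h

theorem copyHeap_apply (hren : Function.Injective ren) (hsrc h : Heap) (b : ObjId) :
    copyHeap ren hsrc h (ren b) = some fun f => ((hsrc b).bind (· f)).map (renameVal ren) :=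
  hren.extend_apply _ _ _

theorem copyHeap_apply_of_notMem_range (hsrc h : Heap) {a : ObjId} (ha : a ∉ Set.range ren) :
    copyHeap ren hsrc h a = h a :=
  Function.extend_apply' _ _ _ ha

theorem reach_copyHeap_iff (hren : Function.Injective ren) (hsrc h : Heap) (o : ObjId) (u : Val) :
    Reach (copyHeap ren hsrc h) (.obj (ren o)) u ↔
      ∃ w, Reach hsrc (.obj o) w ∧ renameVal ren w = u := by
  constructor
  · intro hu
    induction hu with
    | refl => exact ⟨.obj o, .refl _, rfl⟩
    | step _ hr hf ih =>
      obtain ⟨w, hw, hwa⟩ := ih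
      obtain ⟨b, rfl, rfl⟩ := renameVal_eq_obj_iff.1 hwa
      rw [copyHeap_apply hren, Option.some_inj] at hr
      subst hr
      obtain ⟨w', hbw', rfl⟩ := Option.map_eq_some_iff.1 hf
      obtain ⟨r, hbr, hrf⟩ := Option.bind_eq_some_iff.1 hbw'
      exact ⟨w', .step hw hbr hrf, rfl⟩
  · rintro ⟨w, hw, rfl⟩
    induction hw with
    | refl => exact .refl _
    | @step _ _ f _ _ hr hf ih =>
      refine .step (f := f) ih (copyHeap_apply hren _ _ _) ?_
      simp [hr, hf]

theorem copySpec_copyHeap {g : GHeap} {q : Place} {h hsrc : Heap} {o : ObjId}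
    (hgq : g q = some h) (hgo : g (home o) = some hsrc) (hren : Function.Injective ren)
    (hfresh : ∀ b, h (ren b) = none) (hhome : ∀ b, home (ren b) = q) :
    CopySpec (.obj o) q g (.obj (ren o)) (Function.update g q (some (copyHeap ren hsrc h))) := by
  have hreach := reach_copyHeap_iff hren hsrc h o
  refine .obj (ι := renameVal ren) hgq hgo ?_ ?_ (hfresh o) (by simp [copyHeap_apply hren])
    ⟨rfl, fun w hw => (hreach _).2 ⟨w, hw, rfl⟩, fun w w' _ _ => (renameVal_injective hren ·),
      fun u hu => (hreach u).1 hu,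
      fun a r _ har => ⟨ren a, _, rfl, copyHeap_apply hren _ _ a, by simp [har]⟩,
      fun _ _ => rfl⟩ ?_
  · intro a r har
    rwa [copyHeap_apply_of_notMem_range]
    rintro ⟨b, rfl⟩
    simp [hfresh] at har
  · intro a ha hca
    by_cases hra : a ∈ Set.range ren
    · obtain ⟨b, rfl⟩ := hra
      exact hhome b
    · exact absurd (copyHeap_apply_of_notMem_range hsrc h hra ▸ ha) hca
  · intro u hu
    obtain ⟨w, -, rfl⟩ := (hreach u).1 hu
    cases w with
    | obj b => exact .inl ⟨ren b, rfl, hfresh b, by simp [copyHeap_apply hren]⟩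
    | _ => exact .inr fun _ => by simp [renameVal]

end Copy

theorem exists_copySpec {g : GHeap} (htotal : ∀ p, (g p).isSome) (hfin : FiniteHeaps g)
    (v : Val) (q : Place) : ∃ v' g', CopySpec v q g v' g' := by
  by_cases hv : ∃ o, v = .obj o
  · obtain ⟨o, rfl⟩ := hv
    obtain ⟨h, hgq⟩ := Option.isSome_iff_exists.1 (htotal q)
    obtain ⟨hsrc, hgo⟩ := Option.isSome_iff_exists.1 (htotal (home o))
    obtain ⟨N, hN⟩ := exists_forall_ge_fresh q (hfin q h hgq)
    -- every object id is sent to a distinct id of `q` beyond all allocated ones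
    let ren : ObjId → ObjId := fun b => (q, N + Nat.pairEquiv b)
    have hren : Function.Injective ren := fun a b hab =>
      Nat.pairEquiv.injective (by simpa [ren] using hab)
    exact ⟨_, _, copySpec_copyHeap hgq hgo hren (fun b => hN _ (Nat.le_add_right _ _))
      fun _ => rfl⟩
  · exact ⟨v, g, .nonObj v q g (not_exists.1 hv)⟩

def ECanStep (p : Place) (e : Expr) (h : Heap) : Prop :=
  ∃ l k, EStep p e h l k

def CanStep (res : Bool) (p : Place) (s : Stmt) (g : GHeap) : Prop :=
  ∃ l k, Step res p s g l k

section ExprProgress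

variable {p : Place} {h : Heap}

theorem eCanStep_select_val (v : Val) (f : FieldName) : ECanStep p (.select (.val v) f) h := by
  by_cases hv : ∃ o, v = .obj o
  · obtain ⟨o, rfl⟩ := hv
    cases hof : (h o).bind (· f) with
    | none => exact ⟨_, _, .selectBad hof⟩
    | some w =>
      obtain ⟨r, hor, hrf⟩ := Option.bind_eq_some_iff.1 hof
      exact ⟨_, _, .select hor hrf⟩
  · exact ⟨_, _, .selectBadVal (not_exists.1 hv)⟩

theorem eCanStep_globalref_val (v : Val) : ECanStep p (.globalref (.val v)) h := by
  by_cases hv : ∃ o, v = .obj o ∧ home o = p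
  · obtain ⟨o, rfl, ho⟩ := hv
    exact ⟨_, _, .globalref ho⟩
  · exact ⟨_, _, .globalrefBad fun o hvo ho => hv ⟨o, hvo, ho⟩⟩

theorem eCanStep_valof_val (v : Val) : ECanStep p (.valof (.val v)) h := by
  by_cases hv : ∃ o, v = .gref o ∧ home o = p
  · obtain ⟨o, rfl, ho⟩ := hv
    exact ⟨_, _, .valof ho⟩
  · exact ⟨_, _, .valofBad fun o hvo ho => hv ⟨o, hvo, ho⟩⟩

theorem eCanStep_newObj_val (hfin : {o : ObjId | h o ≠ none}.Finite)
    (fvs : List (FieldName × Val)) :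
    ECanStep p (.newObj (fvs.map fun fv => (fv.1, .val fv.2))) h := by
  obtain ⟨N, hN⟩ := exists_forall_ge_fresh p hfin
  exact ⟨_, _, .newObj (o := (p, N)) rfl (hN N le_rfl)⟩

theorem fields_eq_map_val_or_split (fs : List (FieldName × Expr)) :
    (∃ fvs : List (FieldName × Val), fs = fvs.map fun fv => (fv.1, .val fv.2)) ∨
    ∃ (fvs : List (FieldName × Val)) (f : FieldName) (e : Expr) (rest : List (FieldName × Expr)),
      fs = fvs.map (fun fv => (fv.1, .val fv.2)) ++ (f, e) :: rest ∧ ∀ v, e ≠ .val v := by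
  induction fs with
  | nil => exact .inl ⟨[], rfl⟩
  | cons fe rest ih =>
    obtain ⟨f, e⟩ := fe
    by_cases he : ∃ v, e = .val v
    · obtain ⟨v, rfl⟩ := he
      rcases ih with ⟨fvs, rfl⟩ | ⟨fvs, f', e', rest', rfl, hne⟩
      · exact .inl ⟨(f, v) :: fvs, rfl⟩
      · exact .inr ⟨(f, v) :: fvs, f', e', rest', rfl, hne⟩
    · exact .inr ⟨[], f, e, rest, rfl, not_exists.1 he⟩

theorem ClosedE.eq_val_or_eCanStep (hfin : {o : ObjId | h o ≠ none}.Finite) {e : Expr}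
    (hc : ClosedE [] e) : (∃ v, e = .val v) ∨ ECanStep p e h := by
  induction hc with
  | val v => exact .inl ⟨v, rfl⟩
  | var hx => cases hx
  | select f _ ih =>
    refine .inr ?_
    rcases ih with ⟨v, rfl⟩ | ⟨l, ⟨e', h'⟩ | h', hk⟩
    exacts [eCanStep_select_val v f, ⟨_, _, .selectCtx hk⟩, ⟨_, _, .selectCtxDone hk⟩]
  | @newObj fs _ ih =>
    refine .inr ?_
    rcases fields_eq_map_val_or_split fs with ⟨fvs, rfl⟩ | ⟨fvs, f, e, rest, rfl, hne⟩
    · exact eCanStep_newObj_val hfin fvs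
    rcases ih (f, e) (by simp) with ⟨v, rfl⟩ | ⟨l, ⟨e', h'⟩ | h', hk⟩
    exacts [absurd rfl (hne v), ⟨_, _, .newObjCtx hk⟩, ⟨_, _, .newObjCtxDone hk⟩]
  | globalref _ ih =>
    refine .inr ?_
    rcases ih with ⟨v, rfl⟩ | ⟨l, ⟨e', h'⟩ | h', hk⟩
    exacts [eCanStep_globalref_val v, ⟨_, _, .globalrefCtx hk⟩, ⟨_, _, .globalrefCtxDone hk⟩]
  | valof _ ih =>
    refine .inr ?_
    rcases ih with ⟨v, rfl⟩ | ⟨l, ⟨e', h'⟩ | h', hk⟩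
    exacts [eCanStep_valof_val v, ⟨_, _, .valofCtx hk⟩, ⟨_, _, .valofCtxDone hk⟩]

end ExprProgress

section StmtProgress

variable {res : Bool} {p : Place} {g : GHeap}

theorem CanStep.seq (hp : g p ≠ none) {s : Stmt} (hs : CanStep res p s g) (t : Stmt) :
    CanStep res p (.seq s t) g := by
  obtain ⟨l, k, hk⟩ := hs
  rcases k with ⟨s', g'⟩ | g' <;> rcases l with _ | v | v
  exacts [⟨_, _, .seqStep hk trivial⟩, ⟨_, _, .seqStep hk trivial⟩, ⟨_, _, .seqStepSync hk⟩,
    ⟨_, _, .seqTerm hp hk trivial⟩, ⟨_, _, .seqTerm hp hk trivial⟩, ⟨_, _, .seqTermSync hp hk⟩]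

theorem CanStep.tryCatch (hp : g p ≠ none) {s : Stmt} (hs : CanStep res p s g) (t : Stmt) :
    CanStep res p (.tryCatch s t) g := by
  obtain ⟨l, k, hk⟩ := hs
  rcases k with ⟨s', g'⟩ | g' <;> rcases l with _ | v | v
  exacts [⟨_, _, .tryStep hk trivial⟩, ⟨_, _, .tryStep hk trivial⟩, ⟨_, _, .tryHandle hp hk⟩,
    ⟨_, _, .tryStepDone hk trivial⟩, ⟨_, _, .tryStepDone hk trivial⟩,
    ⟨_, _, .tryHandleDone hp hk⟩]

theorem CanStep.finish {s : Stmt} (hs : CanStep res p s g) (μ : List Val) :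
    CanStep res p (.finish μ s) g := by
  obtain ⟨l, ⟨s', g'⟩ | g', hk⟩ := hs
  exacts [⟨_, _, .finishStep hk⟩, ⟨_, _, .finishEnd hk⟩]

theorem CanStep.atD {q : Place} {s : Stmt} (hs : CanStep res q s g) :
    CanStep res p (.atD q s) g := by
  obtain ⟨l, ⟨s', g'⟩ | g', hk⟩ := hs
  exacts [⟨_, _, .atRun hk⟩, ⟨_, _, .atDone hk⟩]

theorem CanStep.spawned {s : Stmt} (hs : CanStep res p s g) : CanStep res p (.spawned s) g := by
  obtain ⟨l, ⟨s', g'⟩ | g', hk⟩ := hs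
  exacts [⟨_, _, .asyncRun hk⟩, ⟨_, _, .asyncDone hk⟩]

variable {h : Heap}

theorem canStep_fieldUpdate (hgh : g p = some h) (o : ObjId) (f : FieldName) (v : Val) :
    CanStep res p (.assign (.val (.obj o)) f (.val v)) g := by
  cases hof : (h o).bind (· f) with
  | none => exact ⟨_, _, .fieldUpdateBad hgh hof⟩
  | some w =>
    obtain ⟨r, hor, hrf⟩ := Option.bind_eq_some_iff.1 hof
    exact ⟨_, _, .fieldUpdate hgh hor (by simp [hrf])⟩

theorem canStep_assign (hgh : g p = some h) (hfin : {o : ObjId | h o ≠ none}.Finite)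
    {e₁ e₂ : Expr} (h₁ : ClosedE [] e₁) (h₂ : ClosedE [] e₂) (f : FieldName) :
    CanStep res p (.assign e₁ f e₂) g := by
  rcases h₁.eq_val_or_eCanStep hfin with ⟨w, rfl⟩ | ⟨l, ⟨e', h'⟩ | h', hk⟩
  · by_cases hw : ∃ o, w = .obj o
    · obtain ⟨o, rfl⟩ := hw
      rcases h₂.eq_val_or_eCanStep hfin with ⟨v, rfl⟩ | ⟨l, ⟨e', h'⟩ | h', hk⟩
      exacts [canStep_fieldUpdate hgh o f v, ⟨_, _, .ctxAssignR hgh hk⟩,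
        ⟨_, _, .ctxAssignRDone hgh hk⟩]
    · exact ⟨_, _, .fieldUpdateBadVal (by simp [hgh]) (not_exists.1 hw)⟩
  · exact ⟨_, _, .ctxAssignL hgh hk⟩
  · exact ⟨_, _, .ctxAssignLDone hgh hk⟩

theorem canStep_atE (htotal : ∀ p, (g p).isSome) (hfin : FiniteHeaps g) (hgh : g p = some h)
    {e : Expr} (he : ClosedE [] e) (q : Place) (x : VarName) (s : Stmt) :
    CanStep res p (.atE q x e s) g := by
  rcases he.eq_val_or_eCanStep (hfin p h hgh) with ⟨v, rfl⟩ | ⟨l, ⟨e', h'⟩ | h', hk⟩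
  · obtain ⟨v', g', hcopy⟩ := exists_copySpec htotal hfin v q
    exact ⟨_, _, .placeShift (by simp [hgh]) (Option.isSome_iff_ne_none.1 (htotal q)) hcopy⟩
  · exact ⟨_, _, .ctxAtE hgh hk⟩
  · exact ⟨_, _, .ctxAtEDone hgh hk⟩

theorem Closed.canStep (htotal : ∀ p, (g p).isSome) (hfin : FiniteHeaps g) {s : Stmt}
    (hc : Closed [] s) (p : Place) : CanStep res p s g := by
  obtain ⟨h, hgh⟩ := Option.isSome_iff_exists.1 (htotal p)
  have hgp : g p ≠ none := by simp [hgh]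
  match s, hc with
  | .skip, _ => exact ⟨_, _, .skip hgp⟩
  | .throw _, _ => exact ⟨_, _, .throw hgp⟩
  | .bind x e t, .bind he ht =>
    rcases he.eq_val_or_eCanStep (hfin p h hgh) with ⟨v, rfl⟩ | ⟨l, ⟨e', h'⟩ | h', hk⟩
    · obtain ⟨l, k, hk⟩ := (ht.subst (v := v) (List.Subset.refl _)).canStep htotal hfin p
      exact ⟨l, k, .declVal hgp hk⟩
    · exact ⟨_, _, .ctxBind hgh hk⟩
    · exact ⟨_, _, .ctxBindDone hgh hk⟩
  | .assign _ f _, .assign h₁ h₂ => exact canStep_assign hgh (hfin p h hgh) h₁ h₂ f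
  | .seq _ t, .seq hs _ => exact (hs.canStep htotal hfin p).seq hgp t
  | .atE q x _ s, .atE he _ => exact canStep_atE htotal hfin hgh he q x s
  | .async _, _ => exact ⟨_, _, .spawn hgp⟩
  | .finish μ _, .finish hs => exact (hs.canStep htotal hfin p).finish μ
  | .tryCatch _ t, .tryCatch hs _ => exact (hs.canStep htotal hfin p).tryCatch hgp t
  | .atD q _, .atD hs => exact (hs.canStep htotal hfin q).atD
  | .spawned _, .spawned hs => exact (hs.canStep htotal hfin p).spawned
termination_by s.size
decreasing_by all_goals simp only [Stmt.size, Stmt.size_subst]; omega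

end StmtProgress

/-- absence of stuck states — every configuration ⟨s,g⟩ (with s closed and
heaps total and finite, as for TX10 runtime configurations) can make a transition at
place 0; hence every terminal configuration is a bare heap. -/
theorem no_stuck (s : Stmt) (g : GHeap)
    (hclosed : Closed [] s) (htotal : ∀ p : Place, (g p).isSome) (hfin : FiniteHeaps g) :
    ∃ (l : Label) (k : Config), Step false 0 s g l k :=
  hclosed.canStep htotal hfin 0

end TX10
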